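/- arXiv:2310.02088 — 4 statements merged into one kernel-verified Lean document; each statement's English description precedes it below -/
import Mathlib

section
/- Let T : D(T) ⊆ H₁ → H₂ be a densely defined closable linear operator. Then the closure T̄ of T has closed range if and only if the adjoint T* has closed range. -/
noncomputable section

open scoped ENNReal NNReal InnerProductSpace Classical
open TopologicalSpace

local notation "⟪" x ", " y "⟫" => @inner ℂ _ _ x y

section Ops

variable {H₁ H₂ : Type*} [NormedAddCommGroup H₁] [InnerProductSpace ℂ H₁]
  [NormedAddCommGroup H₂] [InnerProductSpace ℂ H₂]

/-- `T` is bounded from below: there is `m > 0` with `m ‖f‖ ≤ ‖T f‖` for all `f ∈ D(T)`. -/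
def LinearPMap.IsBddBelow (T : H₁ →ₗ.[ℂ] H₂) : Prop :=
  ∃ m : ℝ, 0 < m ∧ ∀ f : T.domain, m * ‖(f : H₁)‖ ≤ ‖T f‖

/-- The range of a partially defined operator. -/
def LinearPMap.ran (T : H₁ →ₗ.[ℂ] H₂) : Set H₂ :=
  Set.range fun x : T.domain => T x

/-- `T` is surjective. -/
def LinearPMap.Surj (T : H₁ →ₗ.[ℂ] H₂) : Prop :=
  ∀ y : H₂, ∃ x : T.domain, T x = y

/-- `T` is injective. -/
def LinearPMap.Inj (T : H₁ →ₗ.[ℂ] H₂) : Prop :=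
  ∀ x y : T.domain, T x = T y → x = y

/-- `T` is boundedly invertible (BI): there is an everywhere defined bounded operator
`S : H₂ → H₁` with `T (S g) = g` for all `g ∈ H₂` and `S (T f) = f` for all `f ∈ D(T)`. -/
def LinearPMap.IsBI (T : H₁ →ₗ.[ℂ] H₂) : Prop :=
  ∃ S : H₂ →L[ℂ] H₁, (∀ g : H₂, ∃ hg : S g ∈ T.domain, T ⟨S g, hg⟩ = g) ∧
    ∀ f : T.domain, S (T f) = (f : H₁)

/-- `T` is boundedly invertible onto its range (BIR): `ran T` is closed and `T`, viewed as an
operator into the Hilbert space `ran T`, is boundedly invertible. -/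
def LinearPMap.IsBIR (T : H₁ →ₗ.[ℂ] H₂) : Prop :=
  _root_.IsClosed (T.ran : Set H₂) ∧
  ∃ S : (LinearMap.range T.toFun : Submodule ℂ H₂) →L[ℂ] H₁,
    (∀ g : LinearMap.range T.toFun, ∃ hg : S g ∈ T.domain, T ⟨S g, hg⟩ = (g : H₂)) ∧
    ∀ f : T.domain, S ⟨T f, LinearMap.mem_range_self _ f⟩ = (f : H₁)

end Ops


section AuxCRT

open LinearPMap

variable {H₁ H₂ : Type*} [NormedAddCommGroup H₁] [InnerProductSpace ℂ H₁] [CompleteSpace H₁]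
  [NormedAddCommGroup H₂] [InnerProductSpace ℂ H₂] [CompleteSpace H₂]

set_option linter.unusedSectionVars false

lemma ran_eq_range (A : H₁ →ₗ.[ℂ] H₂) : (LinearMap.range A.toFun : Set H₂) = A.ran := by
  ext y
  constructor
  · rintro ⟨x, hx⟩; exact ⟨x, hx⟩
  · rintro ⟨x, hx⟩; exact ⟨x, hx⟩

lemma keyM (A : H₁ →ₗ.[ℂ] H₂) (hg : IsClosed (A.graph : Set (H₁ × H₂)))
    (hr : IsClosed A.ran) (u : H₁)
    (hu : ∀ x : A.domain, A x = 0 → ⟪u, (x : H₁)⟫ = 0) :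
    ∃ w : H₂, ∀ x : A.domain, ⟪w, A x⟫ = ⟪u, (x : H₁)⟫ := by
  set G := A.graph with hG
  haveI : CompleteSpace G := hg.completeSpace_coe
  set R := LinearMap.range A.toFun with hR
  have hRc : IsClosed (R : Set H₂) := by rw [ran_eq_range]; exact hr
  haveI : CompleteSpace R := hRc.completeSpace_coe
  -- the continuous linear projection from the graph onto the range
  have hmem : ∀ g : G, (g : H₁ × H₂).2 ∈ R := by
    rintro ⟨g, hgG⟩
    rcases A.mem_graph_iff.mp hgG with ⟨a, -, ha2⟩
    exact ha2 ▸ LinearMap.mem_range_self _ a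
  let pl : G →ₗ[ℂ] R :=
    { toFun := fun g => ⟨(g : H₁ × H₂).2, hmem g⟩
      map_add' := fun g h => rfl
      map_smul' := fun c g => rfl }
  have hplb : ∀ g : G, ‖pl g‖ ≤ 1 * ‖g‖ := by
    intro g
    rw [one_mul]
    exact norm_snd_le (g : H₁ × H₂)
  let p : G →L[ℂ] R := pl.mkContinuous 1 hplb
  have hsurj : Function.Surjective p := by
    rintro ⟨z, hz⟩
    rcases LinearMap.mem_range.mp hz with ⟨x, hx⟩
    exact ⟨⟨(↑x, A x), A.mem_graph x⟩, Subtype.ext hx⟩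
  obtain ⟨C, hC0, hC⟩ := p.exists_preimage_norm_le hsurj
  choose g hg1 hg2 using hC
  -- well-definedness
  have wd : ∀ g₁ g₂ : G, p g₁ = p g₂ → ⟪u, (g₁ : H₁ × H₂).1⟫ = ⟪u, (g₂ : H₁ × H₂).1⟫ := by
    intro g₁ g₂ hp
    have h2 : ((g₁ - g₂ : G) : H₁ × H₂).2 = 0 := by
      have := congrArg (Subtype.val) hp
      simp only [p, pl, LinearMap.mkContinuous_apply] at this
      exact sub_eq_zero.mpr this
    have hmem' : ((g₁ - g₂ : G) : H₁ × H₂) ∈ A.graph := (g₁ - g₂).2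
    rcases A.mem_graph_iff.mp hmem' with ⟨a, ha1, ha2⟩
    have hz : A a = 0 := by rw [ha2, h2]
    have h0 : ⟪u, ((g₁ - g₂ : G) : H₁ × H₂).1⟫ = 0 := by rw [← ha1]; exact hu a hz
    have : ⟪u, (g₁ : H₁ × H₂).1 - (g₂ : H₁ × H₂).1⟫ = 0 := by simpa using h0
    rw [inner_sub_right] at this
    linear_combination this
  let ℓ : R →ₗ[ℂ] ℂ :=
    { toFun := fun z => ⟪u, ((g z : G) : H₁ × H₂).1⟫
      map_add' := by
        intro z₁ z₂
        have : p (g (z₁ + z₂)) = p (g z₁ + g z₂) := by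
          rw [_root_.map_add, hg1, hg1, hg1]
        have := wd _ _ this
        simpa [inner_add_right] using this
      map_smul' := by
        intro c z
        have : p (g (c • z)) = p (c • g z) := by rw [_root_.map_smul, hg1, hg1]
        have := wd _ _ this
        simpa [inner_smul_right] using this }
  have hℓb : ∀ z : R, ‖ℓ z‖ ≤ (‖u‖ * C) * ‖z‖ := by
    intro z
    calc ‖ℓ z‖ ≤ ‖u‖ * ‖((g z : G) : H₁ × H₂).1‖ := norm_inner_le_norm _ _
      _ ≤ ‖u‖ * ‖(g z : G)‖ := by
          gcongr; exact norm_fst_le ((g z : G) : H₁ × H₂)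
      _ ≤ ‖u‖ * (C * ‖z‖) := by
          have := hg2 z
          nlinarith [norm_nonneg u, norm_nonneg (g z), norm_nonneg z]
      _ = (‖u‖ * C) * ‖z‖ := by ring
  let ℓ' : R →L[ℂ] ℂ := ℓ.mkContinuous _ hℓb
  let w' : R := (InnerProductSpace.toDual ℂ R).symm ℓ'
  refine ⟨(w' : H₂), fun x => ?_⟩
  set z : R := ⟨A x, LinearMap.mem_range_self _ x⟩ with hzdef
  have h1 : ⟪(w' : H₂), A x⟫ = ℓ z := by
    have : ⟪w', z⟫ = ℓ' z := InnerProductSpace.toDual_symm_apply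
    simpa [Submodule.coe_inner, ℓ'] using this
  have h2 : ℓ z = ⟪u, (x : H₁)⟫ := by
    have hp : p (g z) = p ⟨(↑x, A x), A.mem_graph x⟩ := by
      rw [hg1]; exact Subtype.ext rfl
    exact wd _ _ hp
  rw [h1, h2]


lemma adjoint_graph_closed (A : H₁ →ₗ.[ℂ] H₂) (hA : Dense (A.domain : Set H₁)) :
    IsClosed (A.adjoint.graph : Set (H₂ × H₁)) := by
  have hset : (A.adjoint.graph : Set (H₂ × H₁)) =
      ⋂ x : A.domain, {q : H₂ × H₁ | ⟪q.2, (x : H₁)⟫ = ⟪q.1, A x⟫} := by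
    ext q
    simp only [Set.mem_iInter, Set.mem_setOf_eq, SetLike.mem_coe, LinearPMap.mem_graph_iff]
    constructor
    · rintro ⟨y, hy1, hy2⟩ x
      rw [← hy1, ← hy2]
      exact (adjoint_isFormalAdjoint hA) y x
    · intro h
      have hdom : q.1 ∈ A.adjoint.domain :=
        mem_adjoint_domain_of_exists _ ⟨q.2, fun x => h x⟩
      exact ⟨⟨q.1, hdom⟩, rfl, adjoint_apply_eq hA _ (fun x => h x)⟩
  rw [hset]
  exact isClosed_iInter fun x => isClosed_eq
    ((continuous_snd.inner continuous_const)) ((continuous_fst.inner continuous_const))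

lemma adjoint_closure_eq (T : H₁ →ₗ.[ℂ] H₂) (hdense : Dense (T.domain : Set H₁))
    (hclosable : T.IsClosable) : T.adjoint = T.closure.adjoint := by
  have hle := T.le_closure
  have hSdense : Dense (T.closure.domain : Set H₁) :=
    hdense.mono (by exact_mod_cast hle.1)
  apply le_antisymm
  · -- T.adjoint ≤ T.closure.adjoint, via closed-set extension
    have hform : T.closure.IsFormalAdjoint T.adjoint := by
      intro x y
      -- x : T.closure.domain, y : T.adjoint.domain; goal ⟪T.closure x, y⟫ = ⟪x, T.adjoint y⟫
      have hC : ((x : H₁), T.closure x) ∈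
          {q : H₁ × H₂ | ⟪q.2, (y : H₂)⟫ = ⟪q.1, T.adjoint y⟫} := by
        have hsub : (T.graph : Set (H₁ × H₂)) ⊆
            {q : H₁ × H₂ | ⟪q.2, (y : H₂)⟫ = ⟪q.1, T.adjoint y⟫} := by
          rintro q hq
          rcases T.mem_graph_iff.mp hq with ⟨a, ha1, ha2⟩
          have := (adjoint_isFormalAdjoint hdense) y a
          simp only [Set.mem_setOf_eq, ← ha1, ← ha2]
          rw [← inner_conj_symm (↑a : H₁), this, inner_conj_symm]
        have hcl : closure (T.graph : Set (H₁ × H₂)) ⊆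
            {q : H₁ × H₂ | ⟪q.2, (y : H₂)⟫ = ⟪q.1, T.adjoint y⟫} :=
          closure_minimal hsub (isClosed_eq
            (continuous_snd.inner continuous_const) (continuous_fst.inner continuous_const))
        apply hcl
        rw [show closure (T.graph : Set (H₁ × H₂)) = (T.closure.graph : Set (H₁ × H₂)) by
          have := congrArg SetLike.coe hclosable.graph_closure_eq_closure_graph
          rw [Submodule.topologicalClosure_coe] at this
          exact this]
        exact T.closure.mem_graph x
      exact hC
    exact hform.le_adjoint hSdense
  · -- T.closure.adjoint ≤ T.adjoint
    have hform : T.IsFormalAdjoint T.closure.adjoint := by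
      intro x y
      have hx' : (x : H₁) ∈ T.closure.domain := hle.1 x.2
      have hTx : T x = T.closure ⟨(x : H₁), hx'⟩ := hle.2 rfl
      have := (adjoint_isFormalAdjoint hSdense) y ⟨(x : H₁), hx'⟩
      rw [hTx, ← inner_conj_symm, ← this, inner_conj_symm]
    exact hform.le_adjoint hdense


lemma graph_mem_of_inner (S : H₁ →ₗ.[ℂ] H₂) (hSd : Dense (S.domain : Set H₁))
    (hSg : IsClosed (S.graph : Set (H₁ × H₂))) (w : H₁) (u : H₂)
    (hw : ∀ y : S.adjoint.domain, ⟪w, S.adjoint y⟫ = ⟪u, (y : H₂)⟫) :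
    (w, u) ∈ S.graph := by
  set e := WithLp.linearEquiv 2 ℂ (H₁ × H₂) with he
  set K : Submodule ℂ (WithLp 2 (H₁ × H₂)) := S.graph.comap e.toLinearMap with hK
  have hKc : IsClosed (K : Set (WithLp 2 (H₁ × H₂))) := by
    have h1 : (K : Set (WithLp 2 (H₁ × H₂))) =
        (WithLp.prodContinuousLinearEquiv 2 ℂ H₁ H₂) ⁻¹' (S.graph : Set (H₁ × H₂)) := rfl
    rw [h1]
    exact hSg.preimage (WithLp.prodContinuousLinearEquiv 2 ℂ H₁ H₂).continuous
  haveI : CompleteSpace K := hKc.completeSpace_coe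
  have hq : e.symm (w, u) ∈ Kᗮᗮ := by
    rw [Submodule.mem_orthogonal]
    intro v hv
    have hvK := (Submodule.mem_orthogonal K v).mp hv
    -- decode v
    have hvx : ∀ x : S.domain, ⟪(x : H₁), (v : WithLp 2 (H₁ × H₂)).fst⟫
        + ⟪S x, (v : WithLp 2 (H₁ × H₂)).snd⟫ = 0 := by
      intro x
      have hgK : e.symm ((x : H₁), S x) ∈ K := by
        rw [hK, Submodule.mem_comap]
        simpa using S.mem_graph x
      have := hvK _ hgK
      rw [WithLp.prod_inner_apply] at this
      exact this
    have hbdom : (v : WithLp 2 (H₁ × H₂)).snd ∈ S.adjoint.domain := by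
      apply mem_adjoint_domain_of_exists
      refine ⟨-(v : WithLp 2 (H₁ × H₂)).fst, fun x => ?_⟩
      have := hvx x
      have hc : ⟪(v : WithLp 2 (H₁ × H₂)).fst, (x : H₁)⟫
          + ⟪(v : WithLp 2 (H₁ × H₂)).snd, S x⟫ = 0 := by
        have := congrArg (starRingEnd ℂ) this
        simpa [inner_conj_symm] using this
      rw [inner_neg_left]
      linear_combination -hc
    have hb : S.adjoint ⟨(v : WithLp 2 (H₁ × H₂)).snd, hbdom⟩
        = -(v : WithLp 2 (H₁ × H₂)).fst := by
      apply adjoint_apply_eq hSd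
      intro x
      have := hvx x
      have hc : ⟪(v : WithLp 2 (H₁ × H₂)).fst, (x : H₁)⟫
          + ⟪(v : WithLp 2 (H₁ × H₂)).snd, S x⟫ = 0 := by
        have := congrArg (starRingEnd ℂ) this
        simpa [inner_conj_symm] using this
      rw [inner_neg_left]
      linear_combination -hc
    -- compute inner product
    rw [WithLp.prod_inner_apply]
    change ⟪(v : WithLp 2 (H₁ × H₂)).fst, (e.symm (w, u)).fst⟫
        + ⟪(v : WithLp 2 (H₁ × H₂)).snd, (e.symm (w, u)).snd⟫ = 0
    have e1 : (e.symm (w, u)).fst = w := rfl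
    have e2 : (e.symm (w, u)).snd = u := rfl
    rw [e1, e2]
    have hfst : (v : WithLp 2 (H₁ × H₂)).fst
        = -(S.adjoint ⟨(v : WithLp 2 (H₁ × H₂)).snd, hbdom⟩) := by rw [hb, neg_neg]
    rw [hfst, inner_neg_left]
    have : ⟪S.adjoint ⟨(v : WithLp 2 (H₁ × H₂)).snd, hbdom⟩, w⟫
        = ⟪(v : WithLp 2 (H₁ × H₂)).snd, u⟫ := by
      have := congrArg (starRingEnd ℂ) (hw ⟨(v : WithLp 2 (H₁ × H₂)).snd, hbdom⟩)
      simpa [inner_conj_symm] using this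
    rw [this]
    ring
  rw [Submodule.orthogonal_orthogonal] at hq
  rw [hK, Submodule.mem_comap] at hq
  simpa using hq

end AuxCRT

variable {H₁ H₂ : Type*} [NormedAddCommGroup H₁] [InnerProductSpace ℂ H₁] [CompleteSpace H₁]
  [NormedAddCommGroup H₂] [InnerProductSpace ℂ H₂] [CompleteSpace H₂]

theorem statement1 (T : H₁ →ₗ.[ℂ] H₂)
    (hdense : Dense (T.domain : Set H₁)) (hclosable : T.IsClosable) :
    IsClosed (T.closure.ran : Set H₂) ↔ IsClosed (T.adjoint.ran : Set H₁) := by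
  classical
  rw [adjoint_closure_eq T hdense hclosable]
  set S := T.closure with hS
  have hSd : Dense (S.domain : Set H₁) := hdense.mono (by exact_mod_cast T.le_closure.1)
  have hSg : IsClosed (S.graph : Set (H₁ × H₂)) := hclosable.closure_isClosed
  constructor
  · intro h
    apply isClosed_of_closure_subset
    intro u hu
    have hker : ∀ x : S.domain, S x = 0 → ⟪u, (x : H₁)⟫ = 0 := by
      intro x hx
      have hsub : S.adjoint.ran ⊆ {v : H₁ | ⟪v, (x : H₁)⟫ = 0} := by
        rintro _ ⟨y, rfl⟩
        have hfa := (LinearPMap.adjoint_isFormalAdjoint hSd) y x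
        simp only [Set.mem_setOf_eq]
        rw [hfa, hx, inner_zero_right]
      exact closure_minimal hsub (isClosed_eq
        (Continuous.inner continuous_id continuous_const) continuous_const) hu
    obtain ⟨w, hw⟩ := keyM S hSg h u hker
    have hwdom : w ∈ S.adjoint.domain :=
      LinearPMap.mem_adjoint_domain_of_exists _ ⟨u, fun x => (hw x).symm⟩
    exact ⟨⟨w, hwdom⟩, LinearPMap.adjoint_apply_eq hSd _ (fun x => (hw x).symm)⟩
  · intro h
    apply isClosed_of_closure_subset
    intro u hu
    have hSadjg := adjoint_graph_closed S hSd
    have hker : ∀ y : S.adjoint.domain, S.adjoint y = 0 → ⟪u, (y : H₂)⟫ = 0 := by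
      intro y hy
      have hsub : S.ran ⊆ {v : H₂ | ⟪v, (y : H₂)⟫ = 0} := by
        rintro _ ⟨x, rfl⟩
        have hfa := (LinearPMap.adjoint_isFormalAdjoint hSd) y x
        rw [hy, inner_zero_left] at hfa
        simp only [Set.mem_setOf_eq]
        rw [← inner_conj_symm, ← hfa, map_zero]
      exact closure_minimal hsub (isClosed_eq
        (Continuous.inner continuous_id continuous_const) continuous_const) hu
    obtain ⟨w, hw⟩ := keyM S.adjoint hSadjg h u hker
    have hmem := graph_mem_of_inner S hSd hSg w u hw
    rcases S.mem_graph_iff.mp hmem with ⟨a, ha1, ha2⟩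
    exact ⟨a, ha2⟩
end
end

section
/- Let T : D(T) ⊆ H₁ → H₂ be a densely defined closable linear operator. Then the following are equivalent: (1) T* is surjective; (2) the closure T̄ is bounded from below; (3) T̄ is injective and has closed range. Dually, the following are equivalent: (1') T* is bounded from below; (2') T̄ is surjective; (3') T* is injective and has closed range. -/
noncomputable section

open scoped ENNReal NNReal InnerProductSpace Classical
open TopologicalSpace

local notation "⟪" x ", " y "⟫" => @inner ℂ _ _ x y

variable {H₁ H₂ : Type*} [NormedAddCommGroup H₁] [InnerProductSpace ℂ H₁] [CompleteSpace H₁]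
  [NormedAddCommGroup H₂] [InnerProductSpace ℂ H₂] [CompleteSpace H₂]

section Aux

variable (T : H₁ →ₗ.[ℂ] H₂)

/-- Application of `T` on elements of the domain of the closure. -/
lemma aux_closure_apply_of_le (x : T.domain) (hx : (x : H₁) ∈ T.closure.domain) :
    T.closure ⟨(x : H₁), hx⟩ = T x := by
  have h := T.le_closure
  exact (h.2 (show ((x : T.domain) : H₁) = ((⟨(x : H₁), hx⟩ : T.closure.domain) : H₁) from rfl)).symm

/-- Pairing between the closure and the adjoint. -/
lemma aux_pairing (hdense : Dense (T.domain : Set H₁)) (hclosable : T.IsClosable)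
    (f : T.closure.domain) (g : T.adjoint.domain) :
    ⟪T.adjoint g, (f : H₁)⟫ = ⟪(g : H₂), T.closure f⟫ := by
  have hg : ((f : H₁), T.closure f) ∈ closure (T.graph : Set (H₁ × H₂)) := by
    rw [← Submodule.topologicalClosure_coe, hclosable.graph_closure_eq_closure_graph]
    exact T.closure.mem_graph f
  obtain ⟨u, hu, hlim⟩ := mem_closure_iff_seq_limit.1 hg
  choose y hy1 hy2 using fun n => (T.mem_graph_iff.1 (hu n))
  have hl1 : Filter.Tendsto (fun n => (u n).1) Filter.atTop (nhds (f : H₁)) :=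
    (continuous_fst.tendsto _).comp hlim
  have hl2 : Filter.Tendsto (fun n => (u n).2) Filter.atTop (nhds (T.closure f)) :=
    (continuous_snd.tendsto _).comp hlim
  have e1 : Filter.Tendsto (fun n => ⟪T.adjoint g, (u n).1⟫) Filter.atTop
      (nhds ⟪T.adjoint g, (f : H₁)⟫) := Filter.Tendsto.inner tendsto_const_nhds hl1
  have e2 : Filter.Tendsto (fun n => ⟪(g : H₂), (u n).2⟫) Filter.atTop
      (nhds ⟪(g : H₂), T.closure f⟫) := Filter.Tendsto.inner tendsto_const_nhds hl2
  have heq : (fun n => ⟪T.adjoint g, (u n).1⟫) = fun n => ⟪(g : H₂), (u n).2⟫ := by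
    funext n
    rw [← hy1 n, ← hy2 n]
    exact LinearPMap.adjoint_isFormalAdjoint hdense g (y n)
  rw [heq] at e1
  exact tendsto_nhds_unique e1 e2

/-- The adjoint is a closed operator. -/
lemma aux_adjoint_isClosed (hdense : Dense (T.domain : Set H₁)) :
    T.adjoint.IsClosed := by
  refine IsSeqClosed.isClosed ?_
  intro u p hu hp
  choose y hy1 hy2 using fun n => (T.adjoint.mem_graph_iff.1 (hu n))
  have hl1 : Filter.Tendsto (fun n => (u n).1) Filter.atTop (nhds p.1) :=
    (continuous_fst.tendsto _).comp hp
  have hl2 : Filter.Tendsto (fun n => (u n).2) Filter.atTop (nhds p.2) :=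
    (continuous_snd.tendsto _).comp hp
  have key : ∀ x : T.domain, ⟪p.2, (x : H₁)⟫ = ⟪p.1, T x⟫ := by
    intro x
    have e1 : Filter.Tendsto (fun n => ⟪(u n).2, (x : H₁)⟫) Filter.atTop
        (nhds ⟪p.2, (x : H₁)⟫) := Filter.Tendsto.inner hl2 tendsto_const_nhds
    have e2 : Filter.Tendsto (fun n => ⟪(u n).1, T x⟫) Filter.atTop
        (nhds ⟪p.1, T x⟫) := Filter.Tendsto.inner hl1 tendsto_const_nhds
    have heq : (fun n => ⟪(u n).2, (x : H₁)⟫) = fun n => ⟪(u n).1, T x⟫ := by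
      funext n
      rw [← hy1 n, ← hy2 n]
      exact LinearPMap.adjoint_isFormalAdjoint hdense (y n) x
    rw [heq] at e1
    exact tendsto_nhds_unique e1 e2
  have hmem : p.1 ∈ T.adjoint.domain :=
    T.mem_adjoint_domain_of_exists p.1 ⟨p.2, key⟩
  have happ : T.adjoint ⟨p.1, hmem⟩ = p.2 := T.adjoint_apply_eq hdense _ key
  show p ∈ T.adjoint.graph
  exact T.adjoint.mem_graph_iff.2 ⟨⟨p.1, hmem⟩, rfl, happ⟩

/-- Bounded below implies injective. -/
lemma aux_bdd_inj {S : H₁ →ₗ.[ℂ] H₂} (h : S.IsBddBelow) : S.Inj := by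
  obtain ⟨m, hm, hle⟩ := h
  intro x y hxy
  have h0 : S (x - y) = 0 := by rw [S.map_sub, hxy, sub_self]
  have h2 := hle (x - y)
  rw [h0, norm_zero] at h2
  have h3 : ‖((x - y : S.domain) : H₁)‖ = 0 := by nlinarith [norm_nonneg ((x - y : S.domain) : H₁)]
  have h4 : ((x : H₁) - (y : H₁)) = 0 := by
    rw [← AddSubgroupClass.coe_sub]
    exact norm_eq_zero.1 h3
  exact Subtype.ext (sub_eq_zero.1 h4)

/-- Bounded below + closed implies closed range. -/
lemma aux_bdd_closedRan {S : H₁ →ₗ.[ℂ] H₂} (hS : S.IsClosed) (h : S.IsBddBelow) :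
    IsClosed (S.ran : Set H₂) := by
  obtain ⟨m, hm, hle⟩ := h
  refine IsSeqClosed.isClosed ?_
  intro u y hu hy
  choose fn hfn' using hu
  have hfn : ∀ n, S (fn n) = u n := fun n => hfn' n
  have hcy : CauchySeq u := hy.cauchySeq
  have hcf : CauchySeq (fun n => ((fn n : S.domain) : H₁)) := by
    rw [Metric.cauchySeq_iff] at hcy ⊢
    intro ε hε
    obtain ⟨N, hN⟩ := hcy (m * ε) (by positivity)
    refine ⟨N, fun a ha b hb => ?_⟩
    have h1 := hle (fn a - fn b)
    rw [S.map_sub, hfn a, hfn b] at h1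
    have h2 : dist (u a) (u b) < m * ε := hN a ha b hb
    rw [dist_eq_norm] at h2 ⊢
    rw [AddSubgroupClass.coe_sub] at h1
    nlinarith [norm_nonneg ((fn a : H₁) - (fn b : H₁))]
  obtain ⟨f, hf⟩ := cauchySeq_tendsto_of_complete hcf
  have hmemgraph : (f, y) ∈ (S.graph : Set (H₁ × H₂)) := by
    refine hS.mem_of_tendsto (Filter.Tendsto.prodMk_nhds hf hy) ?_
    filter_upwards with n
    rw [← hfn n]
    exact S.mem_graph (fn n)
  obtain ⟨z, hz1, hz2⟩ := S.mem_graph_iff.1 hmemgraph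
  exact ⟨z, hz2⟩

/-- Closed + injective + closed range gives a bounded left inverse. -/
lemma aux_left_inverse {S : H₁ →ₗ.[ℂ] H₂} (hS : S.IsClosed) (hinj : S.Inj)
    (hran : IsClosed (S.ran : Set H₂)) :
    ∃ B : H₂ →L[ℂ] H₁, ∀ f : S.domain, B (S f) = (f : H₁) := by
  set K : Submodule ℂ H₂ := LinearMap.range S.toFun with hKdef
  have hKset : (K : Set H₂) = S.ran := by
    ext z
    simp [hKdef, LinearMap.mem_range, LinearPMap.ran, Set.mem_range]
  have hK : _root_.IsClosed (K : Set H₂) := by rw [hKset]; exact hran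
  haveI : CompleteSpace K := hK.completeSpace_coe
  have hinj' : Function.Injective S.toFun := fun a b hab => hinj a b hab
  let e : S.domain ≃ₗ[ℂ] K := LinearEquiv.ofInjective S.toFun hinj'
  let B₀ : K →ₗ[ℂ] H₁ := S.domain.subtype ∘ₗ (e.symm : K →ₗ[ℂ] S.domain)
  have hB₀ : ∀ f : S.domain, ∀ h : S f ∈ K, B₀ ⟨S f, h⟩ = (f : H₁) := by
    intro f h
    have he : e f = ⟨S f, h⟩ := Subtype.ext rfl
    show (S.domain.subtype) (e.symm ⟨S f, h⟩) = (f : H₁)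
    rw [← he, LinearEquiv.symm_apply_apply]
    rfl
  have hgraph : _root_.IsClosed (B₀.graph : Set (K × H₁)) := by
    have hφ : Continuous (fun p : K × H₁ => (p.2, (p.1 : H₂))) :=
      Continuous.prodMk continuous_snd (continuous_subtype_val.comp continuous_fst)
    have heq : (B₀.graph : Set (K × H₁)) =
        (fun p : K × H₁ => (p.2, (p.1 : H₂))) ⁻¹' (S.graph : Set (H₁ × H₂)) := by
      ext p
      simp only [SetLike.mem_coe, LinearMap.mem_graph_iff, Set.mem_preimage,
        LinearPMap.mem_graph_iff]
      constructor
      · intro hp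
        obtain ⟨q, hq⟩ := p.1.2
        refine ⟨q, ?_, hq⟩
        have heq : e q = p.1 := Subtype.ext hq
        rw [hp, ← heq]
        show _ = (S.domain.subtype) (e.symm (e q))
        rw [LinearEquiv.symm_apply_apply]
        rfl
      · rintro ⟨q, hq1, hq2⟩
        have : e q = p.1 := Subtype.ext hq2
        rw [← this]
        show p.2 = (S.domain.subtype) (e.symm (e q))
        rw [LinearEquiv.symm_apply_apply]
        exact hq1.symm
    rw [heq]
    exact hS.preimage hφ
  have hcont : Continuous B₀ := B₀.continuous_of_isClosed_graph hgraph
  let BL : K →L[ℂ] H₁ := ⟨B₀, hcont⟩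
  refine ⟨BL.comp (K.orthogonalProjectionOnto), fun f => ?_⟩
  have hmem : S f ∈ K := ⟨f, rfl⟩
  have hproj : K.orthogonalProjectionOnto (S f) = ⟨S f, hmem⟩ :=
    Submodule.orthogonalProjectionOnto_mem_subspace_eq_self (⟨S f, hmem⟩ : K)
  show BL (K.orthogonalProjectionOnto (S f)) = (f : H₁)
  rw [hproj]
  exact hB₀ f hmem

/-- Open mapping theorem for closed surjective operators. -/
lemma aux_omt {S : H₁ →ₗ.[ℂ] H₂} (hS : S.IsClosed) (hsurj : S.Surj) :
    ∃ C : ℝ, 0 < C ∧ ∀ k : H₂, ∃ f : S.domain, S f = k ∧ ‖(f : H₁)‖ ≤ C * ‖k‖ := by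
  have hG : _root_.IsClosed (S.graph : Set (H₁ × H₂)) := hS
  haveI : CompleteSpace S.graph := hG.completeSpace_coe
  let π : S.graph →L[ℂ] H₂ := (ContinuousLinearMap.snd ℂ H₁ H₂).comp (Submodule.subtypeL S.graph)
  have hπ : Function.Surjective π := by
    intro k
    obtain ⟨f, hf⟩ := hsurj k
    refine ⟨⟨((f : H₁), k), ?_⟩, rfl⟩
    rw [← hf]
    exact S.mem_graph f
  obtain ⟨C, hC, hCle⟩ := π.exists_preimage_norm_le hπ
  refine ⟨C, hC, fun k => ?_⟩
  obtain ⟨x, hx1, hx2⟩ := hCle k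
  obtain ⟨z, hz1, hz2⟩ := S.mem_graph_iff.1 x.2
  have hx1' : (x : H₁ × H₂).2 = k := hx1
  refine ⟨z, by rw [hz2, hx1'], ?_⟩
  rw [hz1]
  calc ‖(x : H₁ × H₂).1‖ ≤ ‖(x : H₁ × H₂)‖ := norm_fst_le _
  _ = ‖x‖ := rfl
  _ ≤ C * ‖k‖ := hx2

/-- Central lemma: characterization of the graph of the closure via the adjoint. -/
lemma aux_central (hdense : Dense (T.domain : Set H₁)) (hclosable : T.IsClosable)
    (f : H₁) (k : H₂) (h : ∀ g : T.adjoint.domain, ⟪(g : H₂), k⟫ = ⟪T.adjoint g, f⟫) :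
    ∃ hf : f ∈ T.closure.domain, T.closure ⟨f, hf⟩ = k := by
  suffices hmem : (f, k) ∈ T.closure.graph by
    obtain ⟨y, hy1, hy2⟩ := T.closure.mem_graph_iff.1 hmem
    have hy1' : (y : H₁) = f := hy1
    subst hy1'
    refine ⟨y.2, ?_⟩
    rw [Subtype.coe_eta]
    exact hy2
  rw [← SetLike.mem_coe, ← hclosable.graph_closure_eq_closure_graph,
    Submodule.topologicalClosure_coe]
  -- set up the rotation map into the L² product
  let rotL : (H₁ × H₂) →ₗ[ℂ] (H₂ × H₁) := (LinearMap.snd ℂ H₁ H₂).prod (-(LinearMap.fst ℂ H₁ H₂))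
  let rotLinv : (H₂ × H₁) →ₗ[ℂ] (H₁ × H₂) :=
    (-(LinearMap.snd ℂ H₂ H₁)).prod (LinearMap.fst ℂ H₂ H₁)
  let rotE : (H₁ × H₂) ≃ₗ[ℂ] (H₂ × H₁) :=
    LinearEquiv.ofLinear rotL rotLinv
      (by ext p <;> simp [rotL, rotLinv]) (by ext p <;> simp [rotL, rotLinv])
  let rot : (H₁ × H₂) ≃L[ℂ] (H₂ × H₁) :=
    ⟨rotE, continuous_snd.prodMk continuous_fst.neg,
      continuous_snd.neg.prodMk continuous_fst⟩
  let EqP := WithLp.prodContinuousLinearEquiv 2 ℂ H₂ H₁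
  let J : (H₁ × H₂) ≃L[ℂ] WithLp 2 (H₂ × H₁) := rot.trans EqP.symm
  let M : Submodule ℂ (WithLp 2 (H₂ × H₁)) :=
    T.graph.map (J.toLinearEquiv : (H₁ × H₂) →ₗ[ℂ] WithLp 2 (H₂ × H₁))
  have hJfst : ∀ p : H₁ × H₂, (J p).fst = p.2 := fun p => rfl
  have hJsnd : ∀ p : H₁ × H₂, (J p).snd = -p.1 := fun p => rfl
  -- reduce to membership of J (f, k) in the double orthogonal complement
  have hJinj : Function.Injective J := J.injective
  rw [← hJinj.mem_set_image (a := (f, k))]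
  have himg := J.toHomeomorph.image_closure (T.graph : Set (H₁ × H₂))
  rw [ContinuousLinearEquiv.coe_toHomeomorph] at himg
  rw [himg]
  have hMset : (J : (H₁ × H₂) → WithLp 2 (H₂ × H₁)) '' (T.graph : Set (H₁ × H₂)) =
      (M : Set (WithLp 2 (H₂ × H₁))) := by
    rw [Submodule.map_coe]
    rfl
  rw [hMset, ← Submodule.topologicalClosure_coe, ← Submodule.orthogonal_orthogonal_eq_closure,
    SetLike.mem_coe, Submodule.mem_orthogonal]
  intro u hu
  -- identify u as an element of the adjoint graph
  have claim : ∀ x : T.domain, ⟪u.snd, (x : H₁)⟫ = ⟪u.fst, T x⟫ := by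
    intro x
    have hvM : J ((x : H₁), T x) ∈ M :=
      Submodule.mem_map_of_mem (T.mem_graph x)
    have h0 := (Submodule.mem_orthogonal _ _).1 hu _ hvM
    rw [WithLp.prod_inner_apply, WithLp.ofLp_fst, WithLp.ofLp_snd, WithLp.ofLp_fst, WithLp.ofLp_snd, hJfst, hJsnd] at h0
    have h1 : ⟪T x, u.fst⟫ = ⟪(x : H₁), u.snd⟫ := by
      rw [inner_neg_left] at h0
      linear_combination h0
    rw [← inner_conj_symm, ← h1, inner_conj_symm]
  have hadj : u.fst ∈ T.adjoint.domain :=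
    T.mem_adjoint_domain_of_exists u.fst ⟨u.snd, claim⟩
  have happ : T.adjoint ⟨u.fst, hadj⟩ = u.snd := T.adjoint_apply_eq hdense _ claim
  rw [WithLp.prod_inner_apply, WithLp.ofLp_fst, WithLp.ofLp_snd, WithLp.ofLp_fst, WithLp.ofLp_snd, hJfst, hJsnd]
  have hk := h ⟨u.fst, hadj⟩
  rw [happ] at hk
  rw [inner_neg_right]
  change ⟪u.fst, k⟫ + -⟪u.snd, f⟫ = 0
  rw [← hk]
  ring

end Aux

theorem statement2 (T : H₁ →ₗ.[ℂ] H₂)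
    (hdense : Dense (T.domain : Set H₁)) (hclosable : T.IsClosable) :
    List.TFAE [T.adjoint.Surj, T.closure.IsBddBelow,
        T.closure.Inj ∧ IsClosed (T.closure.ran : Set H₂)] ∧
    List.TFAE [T.adjoint.IsBddBelow, T.closure.Surj,
        T.adjoint.Inj ∧ IsClosed (T.adjoint.ran : Set H₁)] := by
  have hcl : T.closure.IsClosed := hclosable.closure_isClosed
  have hadjcl : T.adjoint.IsClosed := aux_adjoint_isClosed T hdense
  constructor
  · tfae_have 1 → 2 := by
      intro hsurj
      obtain ⟨C, hC, hO⟩ := aux_omt hadjcl hsurj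
      refine ⟨C⁻¹, by positivity, fun f => ?_⟩
      obtain ⟨g, hg, hgle⟩ := hO (f : H₁)
      have hpair := aux_pairing T hdense hclosable f g
      rw [hg] at hpair
      have h1 : ‖(f : H₁)‖ ^ 2 = ‖⟪(g : H₂), T.closure f⟫‖ := by
        rw [← hpair, @inner_self_eq_norm_sq_to_K ℂ]
        simp
      have h2 : ‖⟪(g : H₂), T.closure f⟫‖ ≤ ‖(g : H₂)‖ * ‖T.closure f‖ := norm_inner_le_norm _ _
      rw [inv_mul_le_iff₀ hC]
      rcases (eq_or_lt_of_le (norm_nonneg ((f : H₁)))).imp Eq.symm id with h0 | h0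
      · rw [h0]
        positivity
      · nlinarith [norm_nonneg (T.closure f), norm_nonneg ((g : H₂))]
    tfae_have 2 → 3 := fun h => ⟨aux_bdd_inj h, aux_bdd_closedRan hcl h⟩
    tfae_have 3 → 1 := by
      rintro ⟨hinj, hran⟩
      obtain ⟨B, hB⟩ := aux_left_inverse hcl hinj hran
      intro hvec
      have key : ∀ x : T.domain, ⟪hvec, (x : H₁)⟫ = ⟪B.adjoint hvec, T x⟫ := by
        intro x
        rw [ContinuousLinearMap.adjoint_inner_left]
        have hx : (x : H₁) ∈ T.closure.domain := T.le_closure.1 x.2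
        rw [← aux_closure_apply_of_le T x hx, hB ⟨(x : H₁), hx⟩]
      have hg : B.adjoint hvec ∈ T.adjoint.domain :=
        T.mem_adjoint_domain_of_exists _ ⟨hvec, key⟩
      exact ⟨⟨_, hg⟩, T.adjoint_apply_eq hdense _ key⟩
    tfae_finish
  · tfae_have 1 → 3 := fun h => ⟨aux_bdd_inj h, aux_bdd_closedRan hadjcl h⟩
    tfae_have 3 → 2 := by
      rintro ⟨hinj, hran⟩
      obtain ⟨B, hB⟩ := aux_left_inverse hadjcl hinj hran
      intro k
      have key : ∀ g : T.adjoint.domain, ⟪(g : H₂), k⟫ = ⟪T.adjoint g, B.adjoint k⟫ := by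
        intro g
        rw [ContinuousLinearMap.adjoint_inner_right, hB g]
      obtain ⟨hf, happ⟩ := aux_central T hdense hclosable (B.adjoint k) k key
      exact ⟨⟨_, hf⟩, happ⟩
    tfae_have 2 → 1 := by
      intro hsurj
      obtain ⟨C, hC, hO⟩ := aux_omt hcl hsurj
      refine ⟨C⁻¹, by positivity, fun g => ?_⟩
      obtain ⟨fd, hfd, hfle⟩ := hO (g : H₂)
      have hpair := aux_pairing T hdense hclosable fd g
      rw [hfd] at hpair
      have h1 : ‖(g : H₂)‖ ^ 2 = ‖⟪T.adjoint g, (fd : H₁)⟫‖ := by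
        rw [hpair, @inner_self_eq_norm_sq_to_K ℂ]
        simp
      have h2 : ‖⟪T.adjoint g, (fd : H₁)⟫‖ ≤ ‖T.adjoint g‖ * ‖(fd : H₁)‖ := norm_inner_le_norm _ _
      rw [inv_mul_le_iff₀ hC]
      rcases (eq_or_lt_of_le (norm_nonneg ((g : H₂)))).imp Eq.symm id with h0 | h0
      · rw [h0]
        positivity
      · nlinarith [norm_nonneg (T.adjoint g), norm_nonneg ((fd : H₁))]
    tfae_finish
end
end

section
/- Let Ψ = (ψ_i)_{i∈I} be a sequence in H whose synthesis operator D_Ψ is closable, with closure D̄_Ψ. Then Ψ is a lower frame sequence if and only if D̄_Ψ is surjective onto H. -/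
noncomputable section

open scoped ENNReal NNReal InnerProductSpace Classical
open TopologicalSpace

local notation "⟪" x ", " y "⟫" => @inner ℂ _ _ x y

section Seq

variable {I : Type*} [Countable I]
variable {H : Type*} [NormedAddCommGroup H] [InnerProductSpace ℂ H]

/-- `ψ` is a lower frame sequence: there is `A > 0` with `A ‖f‖² ≤ ∑ᵢ |⟨f, ψᵢ⟩|²` for all
`f ∈ H`, where the right-hand side is computed in `ℝ≥0∞` (it may be infinite). -/
def IsLowerFrameSeq (ψ : I → H) : Prop :=
  ∃ A : ℝ, 0 < A ∧ ∀ f : H,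
    ENNReal.ofReal (A * ‖f‖ ^ 2) ≤ ∑' i, (‖⟪f, ψ i⟫‖₊ : ℝ≥0∞) ^ 2

/-- `ψ` is a Riesz-Fischer sequence: there is `A > 0` with `A ‖c‖² ≤ ‖∑ᵢ cᵢ ψᵢ‖²` for all
finitely supported scalar sequences `c`. -/
def IsRieszFischerSeq (ψ : I → H) : Prop :=
  ∃ A : ℝ, 0 < A ∧ ∀ c : I →₀ ℂ,
    A * ∑ i ∈ c.support, ‖c i‖ ^ 2 ≤ ‖∑ i ∈ c.support, c i • ψ i‖ ^ 2

/-- `ψ` is minimal: no element lies in the closed span of the remaining ones. -/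
def IsMinimalSeq (ψ : I → H) : Prop :=
  ∀ j : I, ψ j ∉ (Submodule.span ℂ (ψ '' {i | i ≠ j})).topologicalClosure

/-- `ψ` is complete: its closed linear span is all of `H`. -/
def IsCompleteSeq (ψ : I → H) : Prop :=
  (Submodule.span ℂ (Set.range ψ)).topologicalClosure = ⊤

/-- `ψ` is ω-independent: `∑ᵢ cᵢ ψᵢ = 0` (convergent in `H`) implies `cᵢ = 0` for all `i`. -/
def IsOmegaIndependent (ψ : I → H) : Prop :=
  ∀ c : I → ℂ, HasSum (fun i => c i • ψ i) 0 → ∀ i, c i = 0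

/-- `φ` is biorthogonal to `ψ`: `⟨ψᵢ, φⱼ⟩ = δᵢⱼ`. -/
def IsBiorthogonal (ψ φ : I → H) : Prop :=
  ∀ i j, ⟪ψ i, φ j⟫ = if i = j then 1 else 0

/-- `ψ` is exact: removing any single element strictly decreases the closed span. -/
def IsExactSeq (ψ : I → H) : Prop :=
  ∀ k : I, (Submodule.span ℂ (Set.range ψ)).topologicalClosure ≠
    (Submodule.span ℂ (ψ '' {i | i ≠ k})).topologicalClosure

/-- The domain of the synthesis operator of `ψ`: all `c ∈ ℓ²(I)` such that `∑ᵢ cᵢ ψᵢ`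
converges in `H`. -/
def synthesisDomain (ψ : I → H) : Submodule ℂ (lp (fun _ : I => ℂ) 2) where
  carrier := {c | ∃ y : H, HasSum (fun i => c i • ψ i) y}
  zero_mem' := ⟨0, by
    simpa [lp.coeFn_zero] using (hasSum_zero : HasSum (fun _ : I => (0 : H)) 0)⟩
  add_mem' := by
    rintro c d ⟨y, hy⟩ ⟨z, hz⟩
    exact ⟨y + z, by simpa [lp.coeFn_add, add_smul] using hy.add hz⟩
  smul_mem' := by
    rintro a c ⟨y, hy⟩
    exact ⟨a • y, by simpa [lp.coeFn_smul, smul_smul] using hy.const_smul a⟩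

/-- The synthesis operator `D_ψ : ℓ²(I) ⊇ D(D_ψ) → H`, `c ↦ ∑ᵢ cᵢ ψᵢ`. -/
def synthesisOp (ψ : I → H) : (lp (fun _ : I => ℂ) 2) →ₗ.[ℂ] H where
  domain := synthesisDomain ψ
  toFun :=
    { toFun := fun c => ∑' i, ((c : lp (fun _ : I => ℂ) 2) : ∀ _ : I, ℂ) i • ψ i
      map_add' := by
        rintro ⟨c, y, hy⟩ ⟨d, z, hz⟩
        have hyd : HasSum (fun i => ((c + d : lp (fun _ : I => ℂ) 2) : ∀ _ : I, ℂ) i • ψ i)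
            (y + z) := by simpa [lp.coeFn_add, add_smul] using hy.add hz
        simp only [Submodule.coe_add]
        rw [hy.tsum_eq, hz.tsum_eq, hyd.tsum_eq]
      map_smul' := by
        rintro a ⟨c, y, hy⟩
        have hya : HasSum (fun i => ((a • c : lp (fun _ : I => ℂ) 2) : ∀ _ : I, ℂ) i • ψ i)
            (a • y) := by simpa [lp.coeFn_smul, smul_smul] using hy.const_smul a
        simp only [SetLike.val_smul, RingHom.id_apply]
        rw [hy.tsum_eq, hya.tsum_eq] }

/-- The domain of the analysis operator of `ψ`: all `f ∈ H` with `(⟨f, ψᵢ⟩)ᵢ ∈ ℓ²(I)`. -/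
def analysisDomain (ψ : I → H) : Submodule ℂ H where
  carrier := {f | Memℓp (fun i => ⟪ψ i, f⟫) 2}
  zero_mem' := by simpa [Pi.zero_def] using (zero_memℓp : Memℓp (0 : ∀ _ : I, ℂ) 2)
  add_mem' := by
    intro f g hf hg
    simpa [inner_add_right, Pi.add_def] using hf.add hg
  smul_mem' := by
    intro a f hf
    simpa [inner_smul_right] using hf.const_mul a

/-- The analysis operator `C_ψ : H ⊇ D(C_ψ) → ℓ²(I)`, `f ↦ (⟨f, ψᵢ⟩)ᵢ`. -/
def analysisOp (ψ : I → H) : H →ₗ.[ℂ] (lp (fun _ : I => ℂ) 2) where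
  domain := analysisDomain ψ
  toFun :=
    { toFun := fun f => ⟨fun i => ⟪ψ i, (f : H)⟫, f.2⟩
      map_add' := by
        intro f g
        exact lp.ext (funext fun i => by simp [inner_add_right] <;> rfl)
      map_smul' := by
        intro a f
        exact lp.ext (funext fun i => by simp [inner_smul_right]) }

end Seq

set_option linter.unusedSectionVars false

section MyAux

variable {I : Type*} [Countable I]
variable {H : Type*} [NormedAddCommGroup H] [InnerProductSpace ℂ H]

local notation "ℓ²" => lp (fun _ : I => ℂ) 2

lemma myaux_single_hasSum (ψ : I → H) (i : I) :
    HasSum (fun j => ((lp.single 2 i (1:ℂ) : ℓ²) : ∀ _ : I, ℂ) j • ψ j) (ψ i) := by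
  have h : ∀ j, ((lp.single 2 i (1:ℂ) : ℓ²) : ∀ _ : I, ℂ) j • ψ j
      = if j = i then ψ i else 0 := by
    intro j
    by_cases hj : j = i
    · subst hj; simp [lp.single_apply_self]
    · simp [lp.single_apply_ne 2 i _ hj, hj]
  rw [funext h]
  exact hasSum_ite_eq i (ψ i)

lemma myaux_single_mem (ψ : I → H) (i : I) :
    (lp.single 2 i (1:ℂ) : ℓ²) ∈ synthesisDomain ψ :=
  ⟨ψ i, myaux_single_hasSum ψ i⟩

/-- Key identity: for `c` in the synthesis domain with sum `y` and `f` in the analysis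
domain, `⟪y, f⟫ = ⟪c, C f⟫`. -/
lemma myaux_key (ψ : I → H) {c : ℓ²} {y : H}
    (hy : HasSum (fun i => (c : ∀ _ : I, ℂ) i • ψ i) y)
    {f : H} (hf : f ∈ analysisDomain ψ) :
    ⟪y, f⟫ = ⟪c, (⟨fun i => ⟪ψ i, f⟫, hf⟩ : ℓ²)⟫ := by
  have h1 : HasSum (fun i => ⟪f, (c : ∀ _ : I, ℂ) i • ψ i⟫) ⟪f, y⟫ :=
    (innerSL ℂ f).hasSum hy
  have h2 : HasSum (fun i => starRingEnd ℂ ⟪f, (c : ∀ _ : I, ℂ) i • ψ i⟫)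
      (starRingEnd ℂ ⟪f, y⟫) := h1.star
  have heq : (fun i => starRingEnd ℂ ⟪f, (c : ∀ _ : I, ℂ) i • ψ i⟫)
      = fun i => ⟪(c : ∀ _ : I, ℂ) i,
        ((⟨fun i => ⟪ψ i, f⟫, hf⟩ : ℓ²) : ∀ _ : I, ℂ) i⟫ := by
    funext i
    rw [← inner_conj_symm]
    simp [inner_smul_left, RCLike.inner_apply]
    ring
  rw [heq] at h2
  rw [inner_conj_symm] at h2
  exact h2.unique (lp.hasSum_inner c _)

lemma myaux_two_toReal : (2 : ℝ≥0∞).toReal = 2 := by simp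

lemma myaux_summable_iff (g : I → ℂ) :
    (∑' i, (‖g i‖₊ : ℝ≥0∞) ^ 2 ≠ ⊤) ↔ Summable (fun i => ‖g i‖ ^ (2:ℝ)) := by
  have h1 : ∀ i, (‖g i‖₊ : ℝ≥0∞) ^ 2 = ((‖g i‖₊ ^ 2 : ℝ≥0) : ℝ≥0∞) := by
    intro i; push_cast; ring
  rw [tsum_congr h1, ENNReal.tsum_coe_ne_top_iff_summable]
  rw [← NNReal.summable_coe]
  apply summable_congr
  intro i
  push_cast
  rw [← Real.rpow_natCast ‖g i‖ 2]
  norm_num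

lemma myaux_mem_analysis_iff (ψ : I → H) (f : H) :
    f ∈ analysisDomain ψ ↔ ∑' i, (‖⟪f, ψ i⟫‖₊ : ℝ≥0∞) ^ 2 ≠ ⊤ := by
  rw [myaux_summable_iff]
  have : ∀ i, ‖⟪f, ψ i⟫‖ = ‖⟪ψ i, f⟫‖ := fun i => norm_inner_symm f (ψ i)
  simp_rw [this]
  constructor
  · intro hf
    have := memℓp_gen_iff (f := fun i => ⟪ψ i, f⟫) (p := 2) (by norm_num)
    rw [myaux_two_toReal] at this
    exact this.1 hf
  · intro hs
    apply memℓp_gen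
    rw [myaux_two_toReal]
    exact hs

lemma myaux_sum_eq (ψ : I → H) {f : H} (hf : f ∈ analysisDomain ψ) :
    ∑' i, (‖⟪f, ψ i⟫‖₊ : ℝ≥0∞) ^ 2
      = ENNReal.ofReal (‖(⟨fun i => ⟪ψ i, f⟫, hf⟩ : ℓ²)‖ ^ 2) := by
  have hnorm := lp.norm_rpow_eq_tsum (p := 2) (by norm_num)
    (⟨fun i => ⟪ψ i, f⟫, hf⟩ : ℓ²)
  rw [myaux_two_toReal] at hnorm
  have hsum : Summable (fun i => ‖⟪ψ i, f⟫‖ ^ (2:ℝ)) := by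
    have := (myaux_mem_analysis_iff ψ f).1 hf
    rw [myaux_summable_iff] at this
    simp_rw [norm_inner_symm f] at this
    exact this
  rw [← Real.rpow_natCast (‖_‖) 2]
  push_cast
  rw [hnorm, ENNReal.ofReal_tsum_of_nonneg (fun i => Real.rpow_nonneg (norm_nonneg _) _) hsum]
  apply tsum_congr
  intro i
  rw [← norm_inner_symm f]
  rw [show ((2:ℝ)) = ((2:ℕ):ℝ) by norm_num, Real.rpow_natCast,
    ENNReal.ofReal_pow (norm_nonneg _), ← coe_nnnorm, ENNReal.ofReal_coe_nnreal]

end MyAux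


variable {I : Type*} [Countable I]
variable {H : Type*} [NormedAddCommGroup H] [InnerProductSpace ℂ H] [CompleteSpace H]
  [SeparableSpace H]

set_option maxHeartbeats 1000000 in
theorem statement11 (ψ : I → H) (hclosable : (synthesisOp ψ).IsClosable) :
    IsLowerFrameSeq ψ ↔ (synthesisOp ψ).closure.Surj := by
  constructor
  · rintro ⟨A, hA, hlow⟩ f
    have hre : ∀ (b : H) (hb : b ∈ analysisDomain ψ),
        A * ‖b‖ ^ 2 ≤ ‖(⟨fun i => ⟪ψ i, b⟫, hb⟩ : lp (fun _ : I => ℂ) 2)‖ ^ 2 := by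
      intro b hb
      have h1 := hlow b
      rw [myaux_sum_eq ψ hb, ENNReal.ofReal_le_ofReal_iff (by positivity)] at h1
      exact h1
    set Cop := (analysisOp ψ).toFun with hCop
    have hnorm : ∀ b : (analysisOp ψ).domain, A * ‖(b : H)‖ ^ 2 ≤ ‖Cop b‖ ^ 2 :=
      fun b => hre (b : H) b.2
    have hnorm' : ∀ b : (analysisOp ψ).domain,
        Real.sqrt A * ‖(b : H)‖ ≤ ‖Cop b‖ := by
      intro b
      have h1 := hnorm b
      have h2 := Real.sqrt_le_sqrt h1
      rw [Real.sqrt_mul hA.le, Real.sqrt_sq (norm_nonneg _), Real.sqrt_sq (norm_nonneg _)] at h2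
      exact h2
    have hsA : 0 < Real.sqrt A := Real.sqrt_pos.2 hA
    have hinj : Function.Injective Cop := by
      intro b b' hbb
      have h0 : Cop (b - b') = 0 := by rw [map_sub, hbb, sub_self]
      have h1 := hnorm' (b - b')
      rw [h0, norm_zero] at h1
      have h2 : ‖((b - b' : (analysisOp ψ).domain) : H)‖ = 0 := by
        nlinarith [norm_nonneg ((b - b' : (analysisOp ψ).domain) : H)]
      rw [norm_eq_zero] at h2
      have h3 : (b - b' : (analysisOp ψ).domain) = 0 := by
        exact Subtype.ext (by simpa using h2)
      exact sub_eq_zero.1 h3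
    set e := LinearEquiv.ofInjective Cop hinj with he
    set ℓ₀ : (LinearMap.range Cop) →ₗ[ℂ] ℂ :=
      (((innerSL ℂ f).toLinearMap.comp (analysisOp ψ).domain.subtype).comp
        e.symm.toLinearMap) with hℓ₀
    have hb : ∀ x : LinearMap.range Cop, ‖ℓ₀ x‖ ≤ (‖f‖ * (Real.sqrt A)⁻¹) * ‖x‖ := by
      intro x
      have hx : (x : lp (fun _ : I => ℂ) 2) = Cop (e.symm x) := by
        conv_lhs => rw [← e.apply_symm_apply x]
        rw [he, LinearEquiv.ofInjective_apply]
      have hℓval : ℓ₀ x = ⟪f, ((e.symm x : (analysisOp ψ).domain) : H)⟫ := rfl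
      have hb1 : ‖ℓ₀ x‖ ≤ ‖f‖ * ‖((e.symm x : (analysisOp ψ).domain) : H)‖ := by
        rw [hℓval]; exact norm_inner_le_norm _ _
      have hb2 : ‖((e.symm x : (analysisOp ψ).domain) : H)‖ ≤ (Real.sqrt A)⁻¹ * ‖x‖ := by
        rw [le_inv_mul_iff₀ hsA]
        calc Real.sqrt A * ‖((e.symm x : (analysisOp ψ).domain) : H)‖
            ≤ ‖Cop (e.symm x)‖ := hnorm' _
          _ = ‖(x : lp (fun _ : I => ℂ) 2)‖ := by rw [← hx]
          _ = ‖x‖ := rfl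
      calc ‖ℓ₀ x‖ ≤ ‖f‖ * ‖((e.symm x : (analysisOp ψ).domain) : H)‖ := hb1
        _ ≤ ‖f‖ * ((Real.sqrt A)⁻¹ * ‖x‖) :=
          mul_le_mul_of_nonneg_left hb2 (norm_nonneg f)
        _ = (‖f‖ * (Real.sqrt A)⁻¹) * ‖x‖ := by ring
    set ℓ : (LinearMap.range Cop) →L[ℂ] ℂ :=
      LinearMap.mkContinuous ℓ₀ (‖f‖ * (Real.sqrt A)⁻¹) hb with hℓ
    obtain ⟨g, hg, -⟩ := exists_extension_norm_eq (LinearMap.range Cop) ℓ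
    set d := (InnerProductSpace.toDual ℂ (lp (fun _ : I => ℂ) 2)).symm g with hd
    have hdkey : ∀ b : (analysisOp ψ).domain, ⟪d, Cop b⟫ = ⟪f, (b : H)⟫ := by
      intro b
      have h1 : ⟪d, Cop b⟫ = g (Cop b) := InnerProductSpace.toDual_symm_apply
      have h2 := hg (e b)
      have h3 : ((e b : LinearMap.range Cop) : lp (fun _ : I => ℂ) 2) = Cop b := by
        rw [he, LinearEquiv.ofInjective_apply]
      have h4 : ℓ (e b) = ⟪f, (b : H)⟫ := by
        rw [hℓ, LinearMap.mkContinuous_apply, hℓ₀]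
        simp only [LinearMap.coe_comp, Function.comp_apply, LinearEquiv.coe_coe,
          LinearEquiv.symm_apply_apply, Submodule.coe_subtype,
          ContinuousLinearMap.coe_coe, innerSL_apply_apply]
      rw [h1, ← h3, h2, h4]
    -- membership of (d, f) in the graph of the closure
    have hmem : ((d, f) : (lp (fun _ : I => ℂ) 2) × H) ∈ (synthesisOp ψ).closure.graph := by
      rw [← hclosable.graph_closure_eq_closure_graph]
      set G := (synthesisOp ψ).graph with hG
      set eL := WithLp.prodContinuousLinearEquiv 2 ℂ (lp (fun _ : I => ℂ) 2) H with heL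
      set G' : Submodule ℂ (WithLp 2 ((lp (fun _ : I => ℂ) 2) × H)) :=
        G.comap (eL.toLinearEquiv : WithLp 2 ((lp (fun _ : I => ℂ) 2) × H) →ₗ[ℂ] _) with hG'
    -- first, closure membership in the WithLp world
      have hmem' : eL.symm (d, f) ∈ G'.topologicalClosure := by
        rw [← Submodule.orthogonal_orthogonal_eq_closure]
        rw [Submodule.mem_orthogonal]
        intro v hv
        rw [Submodule.mem_orthogonal] at hv
        have hv' : ∀ u : (lp (fun _ : I => ℂ) 2) × H, u ∈ G → ⟪eL.symm u, v⟫ = 0 := by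
          intro u hu
          refine hv (eL.symm u) ?_
          rw [hG', Submodule.mem_comap]
          simpa using hu
        have hsing : ∀ i : I, ((v.fst : lp (fun _ : I => ℂ) 2) : ∀ _ : I, ℂ) i
            = -⟪ψ i, v.snd⟫ := by
          intro i
          have hmemG : ((lp.single 2 i (1 : ℂ), ψ i) : (lp (fun _ : I => ℂ) 2) × H) ∈ G := by
            rw [hG, LinearPMap.mem_graph_iff]
            refine ⟨⟨lp.single 2 i 1, myaux_single_mem ψ i⟩, rfl, ?_⟩
            exact (myaux_single_hasSum ψ i).tsum_eq
          have h5 := hv' _ hmemG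
          rw [WithLp.prod_inner_apply] at h5
          have h6 : ⟪(lp.single 2 i (1 : ℂ) : lp (fun _ : I => ℂ) 2), v.fst⟫
              + ⟪ψ i, v.snd⟫ = 0 := h5
          rw [lp.inner_single_left] at h6
          simp only [RCLike.inner_apply, map_one, one_mul] at h6
          linear_combination h6
        have hbmem : v.snd ∈ analysisDomain ψ := by
          have hneg : Memℓp (-((v.fst : lp (fun _ : I => ℂ) 2) : ∀ _ : I, ℂ)) 2 :=
            (lp.memℓp v.fst).neg
          have : (fun i => ⟪ψ i, v.snd⟫) = -((v.fst : lp (fun _ : I => ℂ) 2) : ∀ _ : I, ℂ) := by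
            funext i
            simp [hsing i]
          rw [analysisDomain]
          show Memℓp (fun i => ⟪ψ i, v.snd⟫) 2
          rw [this]
          exact hneg
        have hCb : (⟨fun i => ⟪ψ i, v.snd⟫, hbmem⟩ : lp (fun _ : I => ℂ) 2) = -v.fst := by
          apply lp.ext
          funext i
          show ⟪ψ i, v.snd⟫ = -((v.fst : lp (fun _ : I => ℂ) 2) : ∀ _ : I, ℂ) i
          rw [hsing i]; ring
        rw [WithLp.prod_inner_apply]
        have h7 : (eL.symm ((d, f) : (lp (fun _ : I => ℂ) 2) × H)).fst = d := rfl
        have h8 : (eL.symm ((d, f) : (lp (fun _ : I => ℂ) 2) × H)).snd = f := rfl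
        change ⟪v.fst, d⟫ + ⟪v.snd, f⟫ = 0
        have h9 : ⟪v.fst, d⟫ = -⟪v.snd, f⟫ := by
          have h10 := hdkey ⟨v.snd, hbmem⟩
          have h11 : Cop ⟨v.snd, hbmem⟩ = (⟨fun i => ⟪ψ i, v.snd⟫, hbmem⟩
            : lp (fun _ : I => ℂ) 2) := rfl
          rw [h11, hCb] at h10
          have h12 := congrArg (starRingEnd ℂ) h10
          rw [inner_conj_symm, inner_conj_symm] at h12
          rw [← h12, inner_neg_left]
          ring
        rw [h9]; ring
      -- transfer back
      rw [← SetLike.mem_coe, Submodule.topologicalClosure_coe] at hmem' ⊢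
      rw [hG'] at hmem'
      have hpre : ((G.comap (eL.toLinearEquiv
          : WithLp 2 ((lp (fun _ : I => ℂ) 2) × H) →ₗ[ℂ] _)) : Set _)
          = ⇑eL ⁻¹' (G : Set _) := rfl
      rw [hpre, show (⇑eL : WithLp 2 ((lp (fun _ : I => ℂ) 2) × H) → _) = ⇑eL.toHomeomorph
        from rfl, ← eL.toHomeomorph.preimage_closure] at hmem'
      simpa [ContinuousLinearEquiv.coe_toHomeomorph] using hmem'
    rw [LinearPMap.mem_graph_iff] at hmem
    obtain ⟨y, hy1, hy2⟩ := hmem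
    exact ⟨y, hy2⟩
  · intro hsurj
    set T := (synthesisOp ψ).closure with hT
    have hclosed : _root_.IsClosed
        ((T.graph : Submodule ℂ ((lp (fun _ : I => ℂ) 2) × H)) :
          Set ((lp (fun _ : I => ℂ) 2) × H)) := hclosable.closure_isClosed
    haveI : CompleteSpace T.graph := hclosed.completeSpace_coe
    set π : T.graph →L[ℂ] H :=
      (ContinuousLinearMap.snd ℂ (lp (fun _ : I => ℂ) 2) H).comp T.graph.subtypeL with hπ
    have hπsurj : Function.Surjective π := by
      intro y
      obtain ⟨x, hx⟩ := hsurj y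
      exact ⟨⟨((x : lp (fun _ : I => ℂ) 2), y), by rw [← hx]; exact T.mem_graph x⟩, rfl⟩
    obtain ⟨C, hC, hCle⟩ := ContinuousLinearMap.exists_preimage_norm_le π hπsurj
    refine ⟨1 / C ^ 2, by positivity, ?_⟩
    intro f
    by_cases hf : f ∈ analysisDomain ψ
    · rw [myaux_sum_eq ψ hf]
      rw [ENNReal.ofReal_le_ofReal_iff (by positivity)]
      obtain ⟨x, hx, hxnorm⟩ := hCle f
      set m := ‖(⟨fun i => ⟪ψ i, f⟫, hf⟩ : lp (fun _ : I => ℂ) 2)‖ with hm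
      set c : lp (fun _ : I => ℂ) 2 := (x : (lp (fun _ : I => ℂ) 2) × H).1 with hc
      have hxf : (x : (lp (fun _ : I => ℂ) 2) × H).2 = f := hx
      have hcf : ((c, f) : (lp (fun _ : I => ℂ) 2) × H) ∈ T.graph := by
        rw [← hxf]; exact x.2
      -- the functional vanishing on the graph
      set Φ : ((lp (fun _ : I => ℂ) 2) × H) →L[ℂ] ℂ :=
        (innerSL ℂ f).comp (ContinuousLinearMap.snd ℂ _ _) -
        (innerSL ℂ (⟨fun i => ⟪ψ i, f⟫, hf⟩ : lp (fun _ : I => ℂ) 2)).comp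
          (ContinuousLinearMap.fst ℂ _ _) with hΦ
      have hzero : ∀ u ∈ T.graph, Φ u = 0 := by
        have hsub : (T.graph : Set _) ⊆ Φ ⁻¹' {0} := by
          rw [hT, ← hclosable.graph_closure_eq_closure_graph]
          rw [Submodule.topologicalClosure_coe]
          apply closure_minimal
          · rintro ⟨u1, u2⟩ hu
            rw [SetLike.mem_coe, LinearPMap.mem_graph_iff] at hu
            obtain ⟨y, hy1, hy2⟩ := hu
            dsimp only at hy1 hy2
            obtain ⟨w, hw⟩ := y.2
            have hval : (synthesisOp ψ) y = w := hw.tsum_eq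
            have hkey := myaux_key ψ hw hf
            simp only [Set.mem_preimage, Set.mem_singleton_iff, hΦ,
              ContinuousLinearMap.sub_apply, ContinuousLinearMap.comp_apply,
              ContinuousLinearMap.coe_snd', ContinuousLinearMap.coe_fst', innerSL_apply_apply,
              Prod.fst, Prod.snd]
            rw [← hy1, ← hy2, hval]
            have h2 := congrArg (starRingEnd ℂ) hkey
            rw [inner_conj_symm, inner_conj_symm] at h2
            rw [h2, sub_self]
          · exact (isClosed_singleton).preimage Φ.continuous
        intro u hu
        exact hsub hu
      have h1 : ⟪f, f⟫ = ⟪(⟨fun i => ⟪ψ i, f⟫, hf⟩ : lp (fun _ : I => ℂ) 2), c⟫ := by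
        have := hzero (c, f) hcf
        simp only [hΦ, ContinuousLinearMap.sub_apply, ContinuousLinearMap.comp_apply,
          ContinuousLinearMap.coe_snd', ContinuousLinearMap.coe_fst', innerSL_apply_apply] at this
        linear_combination this
      have hb1 : ‖f‖ ^ 2 ≤ m * ‖c‖ := by
        have e1 : (‖f‖ : ℝ) ^ 2 = ‖⟪f, f⟫‖ := by
          rw [inner_self_eq_norm_sq_to_K (𝕜 := ℂ)]
          rw [norm_pow, RCLike.norm_ofReal, abs_norm]
        rw [e1, h1]
        exact norm_inner_le_norm _ _
      have hb2 : ‖c‖ ≤ C * ‖f‖ := by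
        calc ‖c‖ ≤ ‖(x : (lp (fun _ : I => ℂ) 2) × H)‖ := norm_fst_le _
        _ = ‖x‖ := rfl
        _ ≤ C * ‖f‖ := hxnorm
      have hm0 : 0 ≤ m := norm_nonneg _
      rw [one_div, inv_mul_le_iff₀ (by positivity)]
      nlinarith [norm_nonneg f, norm_nonneg c, sq_nonneg (C * m - ‖f‖)]
    · have htop : ∑' i, (‖⟪f, ψ i⟫‖₊ : ℝ≥0∞) ^ 2 = ⊤ := by
        by_contra h
        exact hf ((myaux_mem_analysis_iff ψ f).2 h)
      rw [htop]
      exact le_top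
end
end

section
/- Every minimal lower frame sequence in H is a complete Riesz-Fischer sequence in H. -/
noncomputable section

open scoped ENNReal NNReal InnerProductSpace Classical
open TopologicalSpace

local notation "⟪" x ", " y "⟫" => @inner ℂ _ _ x y

variable {I : Type*} [Countable I]
variable {H : Type*} [NormedAddCommGroup H] [InnerProductSpace ℂ H] [CompleteSpace H]
  [SeparableSpace H]

theorem statement17 (ψ : I → H) (hmin : IsMinimalSeq ψ) (hlow : IsLowerFrameSeq ψ) :
    IsCompleteSeq ψ ∧ IsRieszFischerSeq ψ := by
  obtain ⟨A, hApos, hAf⟩ := hlow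
  -- Construct a biorthogonal family from minimality.
  have key : ∀ j : I, ∃ φ : H, ∀ i, ⟪ψ i, φ⟫ = if i = j then 1 else 0 := by
    intro j
    set M := (Submodule.span ℂ (ψ '' {i | i ≠ j})).topologicalClosure with hM
    set h : H := ψ j - (M.orthogonalProjectionOnto (ψ j) : H) with hh
    have hmem : h ∈ Mᗮ := M.sub_starProjection_mem_orthogonal _
    have hne : h ≠ 0 := by
      intro h0
      apply hmin j
      have : ψ j = (M.orthogonalProjectionOnto (ψ j) : H) := by
        have := sub_eq_zero.mp h0
        simpa using this
      rw [this]
      exact (M.orthogonalProjectionOnto (ψ j)).2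
    refine ⟨((‖h‖ ^ 2 : ℝ)⁻¹ : ℂ) • h, fun i => ?_⟩
    by_cases hij : i = j
    · subst hij
      rw [if_pos rfl, inner_smul_right]
      have hPmem : ((M.orthogonalProjectionOnto (ψ i) : H)) ∈ M :=
        (M.orthogonalProjectionOnto (ψ i)).2
      have h1 : ⟪ψ i, h⟫ = ((‖h‖ : ℂ)) ^ 2 := by
        have : ψ i = (M.orthogonalProjectionOnto (ψ i) : H) + h := by rw [hh]; abel
        rw [this, inner_add_left, hmem _ hPmem, inner_self_eq_norm_sq_to_K, zero_add]
        norm_cast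
      rw [h1]
      have hnorm : (0 : ℝ) < ‖h‖ := norm_pos_iff.mpr hne
      have hne2 : ((‖h‖ : ℂ)) ^ 2 ≠ 0 := by
        apply pow_ne_zero
        simp only [ne_eq, Complex.ofReal_eq_zero]
        positivity
      rw [show ((‖h‖ ^ 2 : ℝ) : ℂ) = ((‖h‖ : ℂ)) ^ 2 by push_cast; ring]
      exact inv_mul_cancel₀ hne2
    · rw [if_neg hij, inner_smul_right]
      have hiM : ψ i ∈ M :=
        (Submodule.span ℂ (ψ '' {k | k ≠ j})).le_topologicalClosure
          (Submodule.subset_span ⟨i, hij, rfl⟩)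
      rw [hmem _ hiM, mul_zero]
  choose φ hφ using key
  constructor
  · -- completeness
    rw [IsCompleteSeq, Submodule.topologicalClosure_eq_top_iff, Submodule.eq_bot_iff]
    intro f hf
    have horth : ∀ i, ⟪f, ψ i⟫ = 0 := by
      intro i
      have := hf (ψ i) (Submodule.subset_span ⟨i, rfl⟩)
      rwa [← inner_eq_zero_symm] at this
    have h1 := hAf f
    have h2 : ∑' i, (‖⟪f, ψ i⟫‖₊ : ℝ≥0∞) ^ 2 = 0 := by
      simp [horth]
    rw [h2, nonpos_iff_eq_zero, ENNReal.ofReal_eq_zero] at h1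
    have : ‖f‖ ^ 2 ≤ 0 := by nlinarith
    have : ‖f‖ = 0 := by nlinarith [sq_nonneg ‖f‖, norm_nonneg f]
    exact norm_eq_zero.mp this
  · refine ⟨A, hApos, fun c => ?_⟩
    set S := c.support with hS
    set f : H := ∑ j ∈ S, c j • φ j with hf
    set g : H := ∑ i ∈ S, c i • ψ i with hg
    have hinner : ∀ i, ⟪f, ψ i⟫ = if i ∈ S then (starRingEnd ℂ) (c i) else 0 := by
      intro i
      rw [hf, sum_inner]
      have step : ∀ j ∈ S, ⟪c j • φ j, ψ i⟫ =
          if i = j then (starRingEnd ℂ) (c j) else 0 := by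
        intro j _
        rw [inner_smul_left, ← inner_conj_symm, hφ j i]
        by_cases hij : i = j <;> simp [hij]
      rw [Finset.sum_congr rfl step, Finset.sum_ite_eq]
    show A * (∑ i ∈ S, ‖c i‖ ^ 2) ≤ ‖g‖ ^ 2
    set Ssum : ℝ := ∑ i ∈ S, ‖c i‖ ^ 2 with hSsum
    have hSnn : (0 : ℝ) ≤ Ssum := Finset.sum_nonneg fun i _ => sq_nonneg _
    have hAfS : A * ‖f‖ ^ 2 ≤ Ssum := by
      have h1 := hAf f
      have h2 : ∑' i, (‖⟪f, ψ i⟫‖₊ : ℝ≥0∞) ^ 2 = ENNReal.ofReal Ssum := by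
        rw [tsum_eq_sum (s := S) (fun i hi => by rw [hinner i, if_neg hi]; simp)]
        rw [hSsum, ENNReal.ofReal_sum_of_nonneg (fun i _ => sq_nonneg _)]
        refine Finset.sum_congr rfl fun i hi => ?_
        rw [hinner i, if_pos hi, ENNReal.ofReal_pow (norm_nonneg _)]
        rw [← enorm_eq_nnnorm, ← ofReal_norm]
        rw [RCLike.norm_conj]
      rw [h2] at h1
      exact (ENNReal.ofReal_le_ofReal_iff hSnn).mp h1
    have hgf : ⟪g, f⟫ = (Ssum : ℂ) := by
      rw [hg, sum_inner]
      have step : ∀ i ∈ S, ⟪c i • ψ i, f⟫ = ((‖c i‖ ^ 2 : ℝ) : ℂ) := by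
        intro i hi
        rw [inner_smul_left]
        have : ⟪ψ i, f⟫ = c i := by
          rw [hf, inner_sum]
          have step2 : ∀ j ∈ S, ⟪ψ i, c j • φ j⟫ = if i = j then c j else 0 := by
            intro j _
            rw [inner_smul_right, hφ j i]
            by_cases hij : i = j <;> simp [hij]
          rw [Finset.sum_congr rfl step2, Finset.sum_ite_eq, if_pos hi]
        rw [this, RCLike.conj_mul]
        norm_cast
      rw [Finset.sum_congr rfl step, hSsum]
      push_cast
      ring
    have hcs : Ssum ≤ ‖g‖ * ‖f‖ := by
      have : ‖⟪g, f⟫‖ ≤ ‖g‖ * ‖f‖ := norm_inner_le_norm _ _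
      rw [hgf] at this
      rwa [Complex.norm_real, Real.norm_of_nonneg hSnn] at this
    rcases eq_or_lt_of_le hSnn with h0 | h0
    · rw [← h0, mul_zero]
      positivity
    · have hfn : 0 ≤ ‖f‖ := norm_nonneg f
      have hgn : 0 ≤ ‖g‖ := norm_nonneg g
      nlinarith [sq_nonneg (‖g‖ * ‖f‖), mul_le_mul hcs hcs hSnn (by positivity : (0:ℝ) ≤ ‖g‖*‖f‖)]
end
end
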